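/- arXiv:2004.04718 — 5 statements merged into one kernel-verified Lean document; each statement's English description precedes it below -/
import Mathlib

section
/- For any two finite graphs G and H, the independence number of the lexicographic product G × H equals the product of the independence numbers: α(G × H) = α(G) · α(H). -/
/-- The lexicographic product of two simple graphs: `(v,u)` is adjacent to `(x,y)`
iff `v ~ x` in `G`, or `v = x` and `u ~ y` in `H`. -/
def SimpleGraph.lexProd {V W : Type*} (G : SimpleGraph V) (H : SimpleGraph W) :
    SimpleGraph (V × W) where
  Adj p q := G.Adj p.1 q.1 ∨ (p.1 = q.1 ∧ H.Adj p.2 q.2)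
  symm := by
    constructor
    rintro p q (h | ⟨h1, h2⟩)
    · exact Or.inl h.symm
    · exact Or.inr ⟨h1.symm, h2.symm⟩
  loopless := by
    constructor
    rintro p (h | ⟨-, h⟩)
    · exact G.irrefl h
    · exact H.irrefl h

/-!
Complementation commutes with the lexicographic product, so it suffices to show
`ω(G[H]) = ω(G) ω(H)`. A product of cliques is a clique of `G[H]`; conversely a clique of `G[H]`
projects onto a clique of `G`, and its fibre over each vertex of `G` projects onto a clique of `H`.
-/

namespace SimpleGraph

open Finset

variable {V W : Type*} {G : SimpleGraph V} {H : SimpleGraph W}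

@[simp]
theorem lexProd_adj {p q : V × W} :
    (G.lexProd H).Adj p q ↔ G.Adj p.1 q.1 ∨ (p.1 = q.1 ∧ H.Adj p.2 q.2) :=
  Iff.rfl

theorem compl_lexProd (G : SimpleGraph V) (H : SimpleGraph W) :
    (G.lexProd H)ᶜ = Gᶜ.lexProd Hᶜ := by
  ext ⟨v, w⟩ ⟨x, y⟩
  by_cases hvx : v = x
  · subst hvx
    simp [Prod.ext_iff]
  · simp [hvx]

theorem IsClique.prod_lexProd {s : Set V} {t : Set W} (hs : G.IsClique s) (ht : H.IsClique t) :
    (G.lexProd H).IsClique (s ×ˢ t) := by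
  rintro ⟨v, w⟩ ⟨hv, hw⟩ ⟨x, y⟩ ⟨hx, hy⟩ hne
  by_cases hvx : v = x
  · subst hvx
    exact Or.inr ⟨rfl, ht hw hy fun hwy => hne (Prod.ext rfl hwy)⟩
  · exact Or.inl (hs hv hx hvx)

theorem IsClique.image_fst_of_lexProd {s : Set (V × W)} (hs : (G.lexProd H).IsClique s) :
    G.IsClique (Prod.fst '' s) := by
  rintro _ ⟨p, hp, rfl⟩ _ ⟨q, hq, rfl⟩ hne
  obtain h | ⟨h, -⟩ := hs hp hq (ne_of_apply_ne Prod.fst hne)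
  · exact h
  · exact absurd h hne

theorem IsClique.image_snd_of_lexProd {s : Set (V × W)} (hs : (G.lexProd H).IsClique s) {v : V}
    (hv : ∀ p ∈ s, p.1 = v) : H.IsClique (Prod.snd '' s) := by
  rintro _ ⟨p, hp, rfl⟩ _ ⟨q, hq, rfl⟩ hne
  obtain h | ⟨-, h⟩ := hs hp hq (ne_of_apply_ne Prod.snd hne)
  · rw [hv p hp, hv q hq] at h
    exact (G.irrefl h).elim
  · exact h

theorem cliqueNum_mul_le_cliqueNum_lexProd [Finite V] [Finite W] :
    G.cliqueNum * H.cliqueNum ≤ (G.lexProd H).cliqueNum := by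
  obtain ⟨s, hs⟩ := G.exists_isNClique_cliqueNum
  obtain ⟨t, ht⟩ := H.exists_isNClique_cliqueNum
  rw [← hs.card_eq, ← ht.card_eq, ← Finset.card_product]
  refine IsClique.card_le_cliqueNum (tc := ?_)
  rw [Finset.coe_product]
  exact hs.isClique.prod_lexProd ht.isClique

theorem cliqueNum_lexProd_le [Finite V] [Finite W] :
    (G.lexProd H).cliqueNum ≤ G.cliqueNum * H.cliqueNum := by
  classical
  obtain ⟨s, hs⟩ := (G.lexProd H).exists_isNClique_cliqueNum
  rw [← hs.card_eq, mul_comm]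
  have fiber_card_le (v : V) : #{p ∈ s | p.1 = v} ≤ H.cliqueNum := by
    set f := {p ∈ s | p.1 = v}
    have hf : ∀ p ∈ (f : Set (V × W)), p.1 = v := fun p hp => (Finset.mem_filter.1 hp).2
    have hsnd_inj : Set.InjOn Prod.snd (f : Set (V × W)) := fun p hp q hq h =>
      Prod.ext ((hf p hp).trans (hf q hq).symm) h
    rw [← Finset.card_image_of_injOn hsnd_inj]
    refine IsClique.card_le_cliqueNum (tc := ?_)
    rw [Finset.coe_image]
    exact (hs.isClique.subset (Finset.coe_subset.2 (Finset.filter_subset _ s))).image_snd_of_lexProd hf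
  calc #s ≤ H.cliqueNum * #(s.image Prod.fst) :=
        Finset.card_le_mul_card_image s _ fun v _ => fiber_card_le v
    _ ≤ H.cliqueNum * G.cliqueNum := by
        gcongr
        refine IsClique.card_le_cliqueNum (tc := ?_)
        rw [Finset.coe_image]
        exact hs.isClique.image_fst_of_lexProd

theorem cliqueNum_lexProd [Finite V] [Finite W] :
    (G.lexProd H).cliqueNum = G.cliqueNum * H.cliqueNum :=
  cliqueNum_lexProd_le.antisymm cliqueNum_mul_le_cliqueNum_lexProd

end SimpleGraph

theorem indepNum_lexProd {V W : Type*} [Fintype V] [Fintype W]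
    (G : SimpleGraph V) (H : SimpleGraph W) :
    (G.lexProd H)ᶜ.cliqueNum = Gᶜ.cliqueNum * Hᶜ.cliqueNum := by
  rw [SimpleGraph.compl_lexProd, SimpleGraph.cliqueNum_lexProd]
end

section
/- Let S be a finite set, let s : V → ℕ for a finite index set V with ∑_{v ∈ V} s(v) = |S| = m > 0, and let 1 = m_1 < m_2 < ⋯ < m_{k+1} be integers with |{v : s(v) > 0}| ≤ m_{k+1} − 1. Then there exists t with 1 ≤ t ≤ k and a set of m_t indices v ∈ V, each satisfying s(v) ≥ m / (2^t · m_{t+1}). -/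
/-!
Suppose that for every `1 ≤ t ≤ k` fewer than `M t` indices satisfy `s v ≥ c t := m / (2^t M (t+1))`.
Sort each index of the support into the layer `t` with `c (t+1) ≤ s v < c t`, where `c (k+1) := 0`;
since `M 1 = 1`, no index lies above `c 1`. Layer `t` has fewer than `M (t+1)` elements, each of
value below `c t`, so it contributes less than `m / 2^t`, and the total is less than
`m (1 - 2^{-k}) < m`.
-/

open Finset

theorem card_filter_le_lt_of_forall_exists_lt {α β : Type*} [LinearOrder β] {s : Finset α}
    {f : α → β} {c : β} {n : ℕ} (h : ∀ A : Finset α, #A = n → ∃ a ∈ A, f a < c) :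
    #{a ∈ s | c ≤ f a} < n := by
  by_contra! hn
  obtain ⟨A, hAs, hA⟩ := exists_subset_card_eq hn
  obtain ⟨a, ha, hac⟩ := h A hA
  exact hac.not_ge (mem_filter.1 (hAs ha)).2

theorem sum_le_of_card_superlevel_le {R V : Type*} [Semiring R] [LinearOrder R] [IsOrderedRing R]
    {P : Finset V} {f : V → R} {θ : ℕ → R} {N : ℕ → ℕ} {k : ℕ}
    (hθ : ∀ t ∈ Icc 1 k, 0 ≤ θ t) (hbot : ∀ v ∈ P, θ (k + 1) ≤ f v)
    (hcount : ∀ t ∈ Icc 1 (k + 1), #{v ∈ P | θ t ≤ f v} ≤ N t) (hN : N 1 = 0) :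
    ∑ v ∈ P, f v ≤ ∑ t ∈ Icc 1 k, N (t + 1) * θ t := by
  have htop (v) (hv : v ∈ P) : f v < θ 1 := by
    have hempty : {v ∈ P | θ 1 ≤ f v} = ∅ :=
      card_eq_zero.1 (Nat.le_zero.1 (hN ▸ hcount 1 (by simp)))
    exact not_le.1 fun h => (eq_empty_iff_forall_notMem.1 hempty) v (mem_filter.2 ⟨hv, h⟩)
  let level : V → ℕ := fun v => sInf {t | θ (t + 1) ≤ f v}
  have level_spec (v) (hv : v ∈ P) : θ (level v + 1) ≤ f v :=
    Nat.sInf_mem (s := {t | θ (t + 1) ≤ f v}) ⟨k, hbot v hv⟩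
  have level_pos (v) (hv : v ∈ P) : 0 < level v :=
    Nat.pos_of_ne_zero fun h0 => (htop v hv).not_ge (by simpa [h0] using level_spec v hv)
  have lt_level (v) (hv : v ∈ P) : f v < θ (level v) := by
    have := Nat.notMem_of_lt_sInf (Nat.sub_lt (level_pos v hv) one_pos)
    change ¬θ (level v - 1 + 1) ≤ f v at this
    rwa [Nat.sub_add_cancel (level_pos v hv), not_le] at this
  have level_mem (v) (hv : v ∈ P) : level v ∈ Icc 1 k :=
    mem_Icc.2 ⟨level_pos v hv, Nat.sInf_le (hbot v hv)⟩
  rw [← sum_fiberwise_of_maps_to level_mem]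
  refine sum_le_sum fun t ht => ?_
  obtain ⟨ht1, htk⟩ := mem_Icc.1 ht
  have hlayer : {v ∈ P | level v = t} ⊆ {v ∈ P | θ (t + 1) ≤ f v} := by
    intro v hv
    obtain ⟨hvP, rfl⟩ := mem_filter.1 hv
    exact mem_filter.2 ⟨hvP, level_spec v hvP⟩
  have hcard := (card_le_card hlayer).trans (hcount (t + 1) (mem_Icc.2 ⟨by omega, by omega⟩))
  calc ∑ v ∈ P with level v = t, f v ≤ #{v ∈ P | level v = t} • θ t :=
        sum_le_card_nsmul _ _ _ fun v hv => by
          obtain ⟨hvP, rfl⟩ := mem_filter.1 hv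
          exact (lt_level v hvP).le
    _ ≤ N (t + 1) * θ t := by
        rw [nsmul_eq_mul]
        exact mul_le_mul_of_nonneg_right (Nat.mono_cast hcard) (hθ t ht)

theorem sum_Icc_one_inv_two_pow (k : ℕ) :
    ∑ t ∈ Icc 1 k, ((2 : ℝ) ^ t)⁻¹ = 1 - ((2 : ℝ) ^ k)⁻¹ := by
  induction k with
  | zero => simp
  | succ k ih =>
    rw [sum_Icc_succ_top (by omega), ih, pow_succ]
    field_simp
    ring

theorem sum_Icc_mul_div_two_pow_mul_le {a b : ℕ → ℝ} {x : ℝ} (hx : 0 ≤ x)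
    (ha : ∀ t, 0 ≤ a t) (hab : ∀ t, a t ≤ b t) (k : ℕ) :
    ∑ t ∈ Icc 1 k, a t * (x / (2 ^ t * b t)) ≤ x * (1 - ((2 : ℝ) ^ k)⁻¹) := by
  rw [← sum_Icc_one_inv_two_pow, mul_sum]
  refine sum_le_sum fun t _ => ?_
  have hb : 0 ≤ b t := (ha t).trans (hab t)
  calc a t * (x / (2 ^ t * b t)) ≤ b t * (x / (2 ^ t * b t)) :=
        mul_le_mul_of_nonneg_right (hab t) (by positivity)
    _ = x * b t / (2 ^ t * b t) := by rw [← mul_div_assoc, mul_comm (b t)]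
    _ ≤ x / 2 ^ t := mul_div_mul_right_le (by positivity)
    _ = x * ((2 : ℝ) ^ t)⁻¹ := div_eq_mul_inv _ _

theorem pigeonhole_fibres_general {V : Type*} [Fintype V] (s : V → ℕ) (m k : ℕ)
    (M : ℕ → ℕ)
    (hsum : ∑ v, s v = m) (hm : 0 < m)
    (hM1 : M 1 = 1)
    (hsupp : (Finset.univ.filter fun v => 0 < s v).card ≤ M (k + 1) - 1) :
    ∃ t, 1 ≤ t ∧ t ≤ k ∧ ∃ A : Finset V, A.card = M t ∧
      ∀ v ∈ A, (m : ℝ) / (2 ^ t * M (t + 1)) ≤ (s v : ℝ) := by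
  by_contra! hfail
  set P := univ.filter fun v => 0 < s v
  let θ : ℕ → ℝ := fun t => if t ≤ k then m / (2 ^ t * M (t + 1)) else 0
  have hθ (t : ℕ) : 0 ≤ θ t := by unfold θ; split_ifs <;> positivity
  have hcount : ∀ t ∈ Icc 1 (k + 1), #{v ∈ P | θ t ≤ s v} ≤ M t - 1 := by
    intro t ht
    obtain ⟨ht1, htk⟩ := mem_Icc.1 ht
    rcases htk.lt_or_eq with htk | rfl
    · have htk : t ≤ k := Nat.lt_succ_iff.1 htk
      have := card_filter_le_lt_of_forall_exists_lt (s := P) (hfail t ht1 htk)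
      simp only [θ, if_pos htk]
      omega
    · rwa [filter_true_of_mem fun v _ => by simp [θ]]
  have hP : ∑ v ∈ P, (s v : ℝ) = m := by
    exact_mod_cast (sum_filter_of_ne fun v _ hv => Nat.pos_of_ne_zero hv).trans hsum
  have hlayers := sum_le_of_card_superlevel_le (fun t _ => hθ t) (fun v _ => by simp [θ]) hcount
    (by simp [hM1])
  have hgeom : ∑ t ∈ Icc 1 k, ((M (t + 1) - 1 : ℕ) : ℝ) * θ t ≤ m * (1 - ((2 : ℝ) ^ k)⁻¹) := by
    refine (sum_congr rfl fun t ht => ?_).trans_le <| sum_Icc_mul_div_two_pow_mul_le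
      (a := fun t => ((M (t + 1) - 1 : ℕ) : ℝ)) (b := fun t => M (t + 1)) (Nat.cast_nonneg m)
      (fun _ => Nat.cast_nonneg _) (fun _ => Nat.mono_cast (Nat.sub_le _ _)) k
    simp only [θ, if_pos (mem_Icc.1 ht).2]
  have : (0 : ℝ) < m * ((2 : ℝ) ^ k)⁻¹ := by positivity
  linarith

/-- Pigeonhole claim from the lexicographic product lemma: if `s : V → ℕ` sums to
`m > 0`, and `1 = M 1 < M 2 < ⋯ < M (k+1)` with the number of indices of positive
`s`-value at most `M (k+1) − 1`, then for some `1 ≤ t ≤ k` there are `M t` indices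
`v` with `s v ≥ m / (2^t * M (t+1))`. -/
theorem pigeonhole_fibres {V : Type*} [Fintype V] (s : V → ℕ) (m k : ℕ)
    (M : ℕ → ℕ)
    (hsum : ∑ v, s v = m) (hm : 0 < m)
    (hM1 : M 1 = 1)
    (hMmono : ∀ i, 1 ≤ i → i ≤ k → M i < M (i + 1))
    (hsupp : (Finset.univ.filter fun v => 0 < s v).card ≤ M (k + 1) - 1) :
    ∃ t, 1 ≤ t ∧ t ≤ k ∧ ∃ A : Finset V, A.card = M t ∧
      ∀ v ∈ A, (m : ℝ) / (2 ^ t * M (t + 1)) ≤ (s v : ℝ) :=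
  pigeonhole_fibres_general s m k M hsum hm hM1 hsupp
end

section
/- If every m-subset of an n-vertex graph G with n ≥ 3m contains both a clique and an independent set of size r+1 (i.e., G is (m, r+1)-locally-Ramsey), then G has an induced subgraph H on at least n/3 vertices such that H contains no clique of size ⌈m/r⌉ and no independent set of size ⌈m/r⌉. -/
/-- If we add a clique `K` of a graph `H` to a set `U` in which every `Hᶜ`-clique has at
most `t` vertices, then every `Hᶜ`-clique in `U ∪ K` has at most `t + 1` vertices. -/
lemma aux_clique_union_bound {V : Type*} [DecidableEq V] (H : SimpleGraph V)
    {U K : Finset V} {t : ℕ}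
    (hU : ∀ J ⊆ U, (Hᶜ).IsClique ↑J → J.card ≤ t)
    (hK : H.IsClique ↑K) :
    ∀ J ⊆ U ∪ K, (Hᶜ).IsClique ↑J → J.card ≤ t + 1 := by
  intro J hJ hJc
  have h1 : (J ∩ U).card ≤ t := by
    refine hU _ Finset.inter_subset_right (hJc.subset ?_)
    simp
  have h2 : (J \ U).card ≤ 1 := by
    rw [Finset.card_le_one]
    intro a ha b hb
    by_contra hne
    have haJ := (Finset.mem_sdiff.mp ha)
    have hbJ := (Finset.mem_sdiff.mp hb)
    have haK : a ∈ K := by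
      have := hJ haJ.1; simp only [Finset.mem_union] at this; tauto
    have hbK : b ∈ K := by
      have := hJ hbJ.1; simp only [Finset.mem_union] at this; tauto
    have hadj : H.Adj a b := hK haK hbK hne
    have hcadj : (Hᶜ).Adj a b := hJc haJ.1 hbJ.1 hne
    rw [SimpleGraph.compl_adj] at hcadj
    exact hcadj.2 hadj
  calc J.card = (J ∩ U).card + (J \ U).card := (Finset.card_inter_add_card_sdiff J U).symm
    _ ≤ t + 1 := Nat.add_le_add h1 h2

/-- If every `m`-subset of an `n`-vertex graph `G` (with `n ≥ 3m`) contains both a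
clique and an independent set of size `r + 1`, then `G` has an induced subgraph on at
least `n/3` vertices (given by a vertex subset `B`) containing no clique of size
`⌈m/r⌉` and no independent set of size `⌈m/r⌉`. -/
theorem ramsey_subgraph_of_locally_ramsey {V : Type*} [Fintype V]
    (G : SimpleGraph V) (n m r : ℕ) (hn : Fintype.card V = n)
    (hr : 1 ≤ r) (hnm : 3 * m ≤ n)
    (hloc : ∀ A : Finset V, A.card = m →
      (∃ K ⊆ A, G.IsNClique (r + 1) K) ∧ (∃ K ⊆ A, (Gᶜ).IsNClique (r + 1) K)) :
    ∃ B : Finset V, (n : ℝ) / 3 ≤ (B.card : ℝ) ∧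
      (¬ ∃ K ⊆ B, G.IsNClique ⌈(m : ℝ) / r⌉₊ K) ∧
      (¬ ∃ K ⊆ B, (Gᶜ).IsNClique ⌈(m : ℝ) / r⌉₊ K) := by
  classical
  set c : ℕ := ⌈(m : ℝ) / r⌉₊ with hc
  -- first, `m ≥ r + 1` since some `m`-set contains an `(r+1)`-clique
  have hmV : m ≤ Fintype.card V := by omega
  obtain ⟨A₀, -, hA₀⟩ := Finset.exists_subset_card_eq (s := (Finset.univ : Finset V))
    (by simpa using hmV)
  obtain ⟨K₀, hK₀A, hK₀⟩ := (hloc A₀ hA₀).1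
  have hm1 : r + 1 ≤ m := by
    have := Finset.card_le_card hK₀A
    rw [hK₀.2, hA₀] at this
    exact this
  -- basic facts about `c`
  have hrR : (0 : ℝ) < r := by exact_mod_cast hr
  have hc1 : 1 ≤ c := by
    rw [hc, Nat.one_le_ceil_iff]
    have hm0 : (0:ℝ) < m := by exact_mod_cast (by omega : 0 < m)
    positivity
  have hcm : m ≤ r * c := by
    have h1 : (m : ℝ) / r ≤ (c : ℝ) := Nat.le_ceil _
    have h2 : (m : ℝ) ≤ (r : ℝ) * c := by
      rw [div_le_iff₀ hrR] at h1; linarith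
    exact_mod_cast h2
  have hcmle : c ≤ m := by
    rw [hc]
    refine Nat.ceil_le.mpr ?_
    rw [div_le_iff₀ hrR]
    have : (1 : ℝ) ≤ r := by exact_mod_cast hr
    have hm0 : (1 : ℝ) ≤ m := by exact_mod_cast (by omega : 1 ≤ m)
    nlinarith
  -- main induction: greedily remove cliques/independent sets of size `c`
  have aux : ∀ N : ℕ, ∀ U₁ U₂ : Finset V, ∀ t₁ t₂ : ℕ,
      (Finset.univ \ (U₁ ∪ U₂)).card ≤ N → Disjoint U₁ U₂ →
      U₁.card = t₁ * c → U₂.card = t₂ * c → t₁ * c < m → t₂ * c < m →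
      (∀ J ⊆ U₁, (Gᶜ).IsClique ↑J → J.card ≤ t₁) →
      (∀ J ⊆ U₂, G.IsClique ↑J → J.card ≤ t₂) →
      ∃ B : Finset V, (n : ℝ) / 3 ≤ (B.card : ℝ) ∧
        (¬ ∃ K ⊆ B, G.IsNClique c K) ∧ (¬ ∃ K ⊆ B, (Gᶜ).IsNClique c K) := by
    intro N
    induction N with
    | zero =>
      intro U₁ U₂ t₁ t₂ hcard hdisj hU₁c hU₂c ht₁ ht₂ _ _
      exfalso
      have hUcard : (U₁ ∪ U₂).card = t₁ * c + t₂ * c := by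
        rw [Finset.card_union_of_disjoint hdisj, hU₁c, hU₂c]
      have h1 : (Finset.univ \ (U₁ ∪ U₂)).card
          = n - (t₁ * c + t₂ * c) := by
        rw [Finset.card_sdiff_of_subset (Finset.subset_univ _), hUcard, Finset.card_univ, hn]
      omega
    | succ N ih =>
      intro U₁ U₂ t₁ t₂ hcard hdisj hU₁c hU₂c ht₁ ht₂ hb₁ hb₂
      set B := Finset.univ \ (U₁ ∪ U₂) with hB
      by_cases h1 : ∃ K ⊆ B, G.IsNClique c K
      · -- remove a clique
        obtain ⟨K, hKB, hK⟩ := h1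
        have hKU₁ : Disjoint K U₁ := by
          refine Finset.disjoint_left.mpr fun a haK haU => ?_
          have := hKB haK
          simp [hB, Finset.mem_sdiff, haU] at this
        have hKU₂ : Disjoint K U₂ := by
          refine Finset.disjoint_left.mpr fun a haK haU => ?_
          have := hKB haK
          simp [hB, Finset.mem_sdiff, haU] at this
        have hbound : ∀ J ⊆ U₁ ∪ K, (Gᶜ).IsClique ↑J → J.card ≤ t₁ + 1 :=
          aux_clique_union_bound G hb₁ hK.1
        by_cases h2 : (t₁ + 1) * c < m
        · -- continue removing
          refine ih (U₁ ∪ K) U₂ (t₁ + 1) t₂ ?_ ?_ ?_ hU₂c h2 ht₂ hbound hb₂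
          · have hsub : Finset.univ \ ((U₁ ∪ K) ∪ U₂) = B \ K := by
              rw [hB]
              ext x
              simp only [Finset.mem_sdiff, Finset.mem_union, Finset.mem_univ, true_and]
              tauto
            rw [hsub]
            have hKsub : K ⊆ B := hKB
            have : (B \ K).card = B.card - K.card := Finset.card_sdiff_of_subset hKsub
            rw [this, hK.2]
            omega
          · rw [Finset.disjoint_union_left]
            exact ⟨hdisj, hKU₂⟩
          · rw [Finset.card_union_of_disjoint hKU₁.symm, hU₁c, hK.2]
            ring
        · -- contradiction: the union of cliques is big enough
          exfalso
          push_neg at h2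
          have hUK : (U₁ ∪ K).card = (t₁ + 1) * c := by
            rw [Finset.card_union_of_disjoint hKU₁.symm, hU₁c, hK.2]; ring
          obtain ⟨A, hAsub, hAcard⟩ := Finset.exists_subset_card_eq
            (s := U₁ ∪ K) (n := m) (by omega)
          obtain ⟨K', hK'A, hK'⟩ := (hloc A hAcard).2
          have hK'card : K'.card ≤ t₁ + 1 :=
            hbound K' (hK'A.trans hAsub) hK'.1
          have ht₁r : t₁ < r := by
            by_contra h
            push_neg at h
            have : r * c ≤ t₁ * c := Nat.mul_le_mul_right c h
            omega
          rw [hK'.2] at hK'card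
          omega
      · by_cases h2 : ∃ K ⊆ B, (Gᶜ).IsNClique c K
        · -- remove an independent set (symmetric)
          obtain ⟨K, hKB, hK⟩ := h2
          have hKU₁ : Disjoint K U₁ := by
            refine Finset.disjoint_left.mpr fun a haK haU => ?_
            have := hKB haK
            simp [hB, Finset.mem_sdiff, haU] at this
          have hKU₂ : Disjoint K U₂ := by
            refine Finset.disjoint_left.mpr fun a haK haU => ?_
            have := hKB haK
            simp [hB, Finset.mem_sdiff, haU] at this
          have hb₂' : ∀ J ⊆ U₂, ((Gᶜ)ᶜ).IsClique ↑J → J.card ≤ t₂ := by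
            simpa using hb₂
          have hbound : ∀ J ⊆ U₂ ∪ K, ((Gᶜ)ᶜ).IsClique ↑J → J.card ≤ t₂ + 1 :=
            aux_clique_union_bound (Gᶜ) hb₂' hK.1
          have hbound' : ∀ J ⊆ U₂ ∪ K, G.IsClique ↑J → J.card ≤ t₂ + 1 := by
            simpa using hbound
          by_cases h3 : (t₂ + 1) * c < m
          · refine ih U₁ (U₂ ∪ K) t₁ (t₂ + 1) ?_ ?_ hU₁c ?_ ht₁ h3 hb₁ hbound'
            · have hsub : Finset.univ \ (U₁ ∪ (U₂ ∪ K)) = B \ K := by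
                rw [hB]
                ext x
                simp only [Finset.mem_sdiff, Finset.mem_union, Finset.mem_univ, true_and]
                tauto
              rw [hsub]
              have : (B \ K).card = B.card - K.card := Finset.card_sdiff_of_subset hKB
              rw [this, hK.2]
              omega
            · rw [Finset.disjoint_union_right]
              exact ⟨hdisj, hKU₁.symm⟩
            · rw [Finset.card_union_of_disjoint hKU₂.symm, hU₂c, hK.2]
              ring
          · exfalso
            push_neg at h3
            have hUK : (U₂ ∪ K).card = (t₂ + 1) * c := by
              rw [Finset.card_union_of_disjoint hKU₂.symm, hU₂c, hK.2]; ring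
            obtain ⟨A, hAsub, hAcard⟩ := Finset.exists_subset_card_eq
              (s := U₂ ∪ K) (n := m) (by omega)
            obtain ⟨K', hK'A, hK'⟩ := (hloc A hAcard).1
            have hK'card : K'.card ≤ t₂ + 1 :=
              hbound' K' (hK'A.trans hAsub) hK'.1
            have ht₂r : t₂ < r := by
              by_contra h
              push_neg at h
              have : r * c ≤ t₂ * c := Nat.mul_le_mul_right c h
              omega
            rw [hK'.2] at hK'card
            omega
        · -- done: B works
          refine ⟨B, ?_, h1, h2⟩
          have hUcard : (U₁ ∪ U₂).card = t₁ * c + t₂ * c := by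
            rw [Finset.card_union_of_disjoint hdisj, hU₁c, hU₂c]
          have hBcard : B.card = n - (t₁ * c + t₂ * c) := by
            rw [hB, Finset.card_sdiff_of_subset (Finset.subset_univ _), hUcard,
              Finset.card_univ, hn]
          have hle : t₁ * c + t₂ * c ≤ 2 * m - 2 := by omega
          have hBge : n - (2 * m - 2) ≤ B.card := by omega
          have : (n : ℝ) / 3 ≤ ((n - (2 * m - 2) : ℕ) : ℝ) := by
            have h2m : 2 * m - 2 ≤ n := by omega
            rw [Nat.cast_sub h2m]
            have hmn : (3 : ℝ) * m ≤ n := by exact_mod_cast hnm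
            have h2 : ((2 * m - 2 : ℕ) : ℝ) = 2 * (m : ℝ) - 2 := by
              have : 2 ≤ 2 * m := by omega
              push_cast [Nat.cast_sub this]
              ring
            rw [h2]
            linarith
          calc (n : ℝ) / 3 ≤ ((n - (2 * m - 2) : ℕ) : ℝ) := this
            _ ≤ (B.card : ℝ) := by exact_mod_cast hBge
  exact aux (Finset.univ \ ((∅ : Finset V) ∪ ∅)).card ∅ ∅ 0 0 le_rfl (by simp)
    (by simp) (by simp) (by omega) (by omega)
    (by intro J hJ _; simp [Finset.subset_empty.mp hJ])
    (by intro J hJ _; simp [Finset.subset_empty.mp hJ])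
end

section
/- For any integer n ≥ 2 there exists an n-vertex graph G such that for every integer r ≥ 2, every subset of ⌈2^{r+8}·log₂ n⌉ vertices of G contains both a clique of size r and an independent set of size r. -/
/-!
Colour every pair `u < v` of vertices independently and uniformly at random. By Hoeffding's
inequality, a fixed set of `s ≥ 2` vertices has fewer than `C(s,2)/2 - s√(s log₂ n)` pairs of a
given colour with probability at most `exp(-4 s log₂ n) ≤ n^(-4s)`, and a union bound over all
vertex sets shows that some colouring avoids this everywhere. Then in each colour class every such
set contains a vertex with at least `(s - 1)/2 - 2√(s log₂ n)` neighbours inside it. Picking this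
vertex and recursing into its neighbourhood finds a clique of size `r` in every set of at least
`(√2^(r+8) - 8)² log₂ n ≤ 2^(r+8) log₂ n` vertices: this threshold is chosen so that the
neighbourhood of a set above the threshold for `r + 1` is above the threshold for `r`. The two
colour classes are a graph and its complement.
-/

open Finset Real SimpleGraph

theorem one_add_exp_neg_le (t : ℝ) : (1 + exp (-t)) / 2 ≤ exp (-t / 2 + t ^ 2 / 8) := by
  have h := cosh_le_exp_half_sq (t / 2)
  rw [cosh_eq] at h
  calc (1 + exp (-t)) / 2 = exp (-t / 2) * ((exp (t / 2) + exp (-(t / 2))) / 2) := by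
        rw [mul_div_assoc', mul_add, ← exp_add, ← exp_add]; ring_nf; rw [exp_zero]; ring
    _ ≤ exp (-t / 2) * exp ((t / 2) ^ 2 / 2) := by gcongr
    _ = exp (-t / 2 + t ^ 2 / 8) := by rw [← exp_add]; ring_nf

section BooleanFunctions

variable {ι : Type*} [Fintype ι] [DecidableEq ι]

theorem sum_exp_neg_mul_card_filter_eq (P : Finset ι) (b : Bool) (t : ℝ) :
    ∑ f : ι → Bool, exp (-t * #{i ∈ P | f i = b}) =
      2 ^ Fintype.card ι * ((1 + exp (-t)) / 2) ^ #P := by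
  have hprod : ∀ f : ι → Bool, exp (-t * #{i ∈ P | f i = b}) =
      ∏ i, (if i ∈ P ∧ f i = b then exp (-t) else 1) := by
    intro f
    rw [prod_ite, prod_const_one, mul_one, prod_const, ← exp_nat_mul, mul_comm]
    congr 4
    ext i
    simp
  have hsum : ∀ i, ∑ x : Bool, (if i ∈ P ∧ x = b then exp (-t) else 1) =
      2 * (if i ∈ P then (1 + exp (-t)) / 2 else 1) := by
    intro i
    by_cases hi : i ∈ P <;> cases b <;> simp [hi] <;> ring
  simp_rw [hprod]
  rw [← Fintype.prod_sum fun i x => if i ∈ P ∧ x = b then exp (-t) else 1]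
  simp_rw [hsum]
  rw [prod_mul_distrib, prod_const, card_univ, prod_ite_mem, univ_inter, prod_const]

theorem hoeffding_card_bool (P : Finset ι) (b : Bool) {d : ℝ} (hd : 0 ≤ d) :
    (#{f : ι → Bool | (#{i ∈ P | f i = b} : ℝ) ≤ #P / 2 - d} : ℝ) ≤
      2 ^ Fintype.card ι * exp (-2 * d ^ 2 / (#P : ℝ)) := by
  set N : ℝ := ((#P : ℕ) : ℝ)
  set t : ℝ := 4 * d / N
  have ht : 0 ≤ t := by positivity
  have markov : (#{f : ι → Bool | (#{i ∈ P | f i = b} : ℝ) ≤ N / 2 - d} : ℝ) *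
      exp (-t * (N / 2 - d)) ≤ ∑ f : ι → Bool, exp (-t * #{i ∈ P | f i = b}) := by
    rw [← nsmul_eq_mul]
    refine (card_nsmul_le_sum _ _ _ fun f hf => ?_).trans
      (sum_le_sum_of_subset_of_nonneg (subset_univ _) fun _ _ _ => (exp_pos _).le)
    rw [mem_filter] at hf
    exact exp_le_exp.mpr (by nlinarith [hf.2])
  rw [sum_exp_neg_mul_card_filter_eq] at markov
  have hmgf : ((1 + exp (-t)) / 2) ^ #P ≤ exp (N * (-t / 2 + t ^ 2 / 8)) := by
    rw [exp_nat_mul]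
    exact pow_le_pow_left₀ (by positivity) (one_add_exp_neg_le t) _
  have hexp : N * (-t / 2 + t ^ 2 / 8) + t * (N / 2 - d) = -2 * d ^ 2 / N := by
    rcases eq_or_ne N 0 with hN | hN
    · simp [t, hN]
    · simp only [t]; field_simp; ring
  calc _ = (#{f : ι → Bool | (#{i ∈ P | f i = b} : ℝ) ≤ N / 2 - d} : ℝ) *
        exp (-t * (N / 2 - d)) * exp (t * (N / 2 - d)) := by rw [mul_assoc, ← exp_add]; simp
    _ ≤ 2 ^ Fintype.card ι * exp (N * (-t / 2 + t ^ 2 / 8)) * exp (t * (N / 2 - d)) :=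
        mul_le_mul_of_nonneg_right (markov.trans (mul_le_mul_of_nonneg_left hmgf (by positivity))) (exp_pos _).le
    _ = 2 ^ Fintype.card ι * exp (-2 * d ^ 2 / N) := by rw [mul_assoc, ← exp_add, hexp]

theorem exists_balanced_coloring {J : Type*} (S : Finset J) (P : J → Finset ι) (d : J → ℝ)
    (hd : ∀ j ∈ S, 0 ≤ d j) (hS : ∑ j ∈ S, exp (-2 * d j ^ 2 / (#(P j) : ℝ)) < 1 / 2) :
    ∃ f : ι → Bool, ∀ j ∈ S, ∀ b, (#(P j) : ℝ) / 2 - d j < #{i ∈ P j | f i = b} := by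
  by_contra! hbad
  have hcover : (univ : Finset (ι → Bool)) ⊆ S.biUnion fun j => univ.biUnion fun b =>
      {f | (#{i ∈ P j | f i = b} : ℝ) ≤ #(P j) / 2 - d j} := by
    intro f _
    obtain ⟨j, hj, b, hb⟩ := hbad f
    simp only [mem_biUnion, mem_filter, mem_univ, true_and]
    exact ⟨j, hj, b, hb⟩
  have hcard := (card_le_card hcover).trans
    (card_biUnion_le.trans (sum_le_sum fun j _ => card_biUnion_le))
  have hcount : (2 : ℝ) ^ Fintype.card ι ≤
      2 * 2 ^ Fintype.card ι * ∑ j ∈ S, exp (-2 * d j ^ 2 / (#(P j) : ℝ)) := by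
    calc (2 : ℝ) ^ Fintype.card ι = #(univ : Finset (ι → Bool)) := by simp
      _ ≤ ∑ j ∈ S, ∑ b,
          (#{f : ι → Bool | (#{i ∈ P j | f i = b} : ℝ) ≤ #(P j) / 2 - d j} : ℝ) := by
        exact_mod_cast hcard
      _ ≤ ∑ j ∈ S, 2 * 2 ^ Fintype.card ι * exp (-2 * d j ^ 2 / (#(P j) : ℝ)) :=
        sum_le_sum fun j hj => by
          rw [Fintype.sum_bool]
          linarith [hoeffding_card_bool (P j) true (hd j hj),
            hoeffding_card_bool (P j) false (hd j hj)]
      _ = _ := by rw [mul_sum]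
  nlinarith [hcount, pow_pos (two_pos (α := ℝ)) (Fintype.card ι)]

end BooleanFunctions

theorem sum_pow_card_add_one_le_exp {V : Type*} [Fintype V] (S : Finset (Finset V))
    (hS : ∅ ∉ S) {x : ℝ} (hx : 0 ≤ x) :
    ∑ B ∈ S, x ^ #B + 1 ≤ exp (Fintype.card V * x) := by
  classical
  calc ∑ B ∈ S, x ^ #B + 1 = ∑ B ∈ insert ∅ S, x ^ #B := by rw [sum_insert hS]; simp [add_comm]
    _ ≤ ∑ B : Finset V, x ^ #B :=
      sum_le_sum_of_subset_of_nonneg (subset_univ _) fun _ _ _ => by positivity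
    _ = (x + 1) ^ Fintype.card V := by
      simpa [powerset_univ] using sum_pow_mul_eq_add_pow x 1 (univ : Finset V)
    _ ≤ exp (Fintype.card V * x) := by
      rw [exp_nat_mul]; exact pow_le_pow_left₀ (by positivity) (add_one_le_exp x) _

theorem card_mul_exp_neg_four_mul_logb_le {n : ℕ} (hn : 2 ≤ n) :
    n * exp (-(4 * logb 2 n)) ≤ 1 / 8 := by
  have hn0 : (0 : ℝ) < n := by positivity
  have hlog : log n ≤ logb 2 n := by
    rw [logb, le_div_iff₀ (log_pos one_lt_two)]
    exact mul_le_of_le_one_right (log_nonneg (by exact_mod_cast (by omega : 1 ≤ n)))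
      (by linarith [log_two_lt_d9])
  calc n * exp (-(4 * logb 2 n)) ≤ n * exp (-((4 : ℕ) * log n)) := by gcongr; norm_num
    _ = 1 / (n : ℝ) ^ 3 := by
      rw [exp_neg, exp_nat_mul, exp_log hn0]; field_simp
    _ ≤ 1 / 8 := by
      gcongr
      calc (8 : ℝ) = 2 ^ 3 := by norm_num
        _ ≤ (n : ℝ) ^ 3 := by gcongr; exact_mod_cast hn

section LinearOrder

variable {V : Type*} [LinearOrder V]

theorem sum_exp_neg_pairs_lt_half [Fintype V] (hV : 2 ≤ Fintype.card V) :
    ∑ B : Finset V with 2 ≤ #B,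
      exp (-2 * (#B * √(#B * logb 2 (Fintype.card V))) ^ 2 / (#{x ∈ B ×ˢ B | x.1 < x.2} : ℝ))
      < 1 / 2 := by
  set L := logb 2 (Fintype.card V)
  have hL : 0 ≤ L := logb_nonneg one_lt_two (by exact_mod_cast (by omega : 1 ≤ Fintype.card V))
  have hterm : ∀ B ∈ ({B | 2 ≤ #B} : Finset (Finset V)),
      exp (-2 * (#B * √(#B * L)) ^ 2 / (#{x ∈ B ×ˢ B | x.1 < x.2} : ℝ)) ≤
        exp (-(4 * L)) ^ #B := by
    intro B hB
    have hs : (2 : ℝ) ≤ #B := by exact_mod_cast (mem_filter.1 hB).2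
    rw [card_product_filter_lt, Nat.cast_choose_two, ← exp_nat_mul, mul_pow,
      sq_sqrt (by positivity)]
    gcongr
    rw [div_le_iff₀ (by nlinarith)]
    nlinarith [mul_nonneg (mul_nonneg (sq_nonneg (#B : ℝ)) hL) (by linarith : (0 : ℝ) ≤ #B)]
  have hS : ∅ ∉ ({B | 2 ≤ #B} : Finset (Finset V)) := by simp
  have h8 : exp (1 / 8) < 3 / 2 := by
    linarith [exp_bound_div_one_sub_of_interval' (x := 1 / 8) (by norm_num) (by norm_num)]
  calc _ ≤ ∑ B : Finset V with 2 ≤ #B, exp (-(4 * L)) ^ #B := sum_le_sum hterm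
    _ ≤ exp (Fintype.card V * exp (-(4 * L))) - 1 := by
      linarith [sum_pow_card_add_one_le_exp _ hS (exp_pos (-(4 * L))).le]
    _ < 1 / 2 := by linarith [exp_le_exp.2 (card_mul_exp_neg_four_mul_logb_le hV)]

theorem exists_pair_coloring_balanced [Fintype V] (hV : 2 ≤ Fintype.card V) :
    ∃ f : V × V → Bool, ∀ B : Finset V, 2 ≤ #B → ∀ b,
      (#{x ∈ B ×ˢ B | x.1 < x.2} : ℝ) / 2 - #B * √(#B * logb 2 (Fintype.card V)) <
        #{x ∈ {x ∈ B ×ˢ B | x.1 < x.2} | f x = b} := by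
  obtain ⟨f, hf⟩ := exists_balanced_coloring {B : Finset V | 2 ≤ #B}
    (fun B => {x ∈ B ×ˢ B | x.1 < x.2}) (fun B => #B * √(#B * logb 2 (Fintype.card V)))
    (fun _ _ => by positivity) (sum_exp_neg_pairs_lt_half hV)
  exact ⟨f, fun B hB => hf B (mem_filter.2 ⟨mem_univ _, hB⟩)⟩

end LinearOrder

theorem sixteen_le_sqrt_two_pow (r : ℕ) : 16 ≤ √2 ^ (r + 8) := calc
  (16 : ℝ) = √2 ^ 8 := by rw [show 8 = 2 * 4 from rfl, pow_mul, sq_sqrt zero_le_two]; norm_num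
  _ ≤ √2 ^ (r + 8) := pow_le_pow_right₀ (one_le_sqrt.2 one_le_two) (by omega)

theorem sq_sub_mul_le_half_sub_two_sqrt {L y s : ℝ} (hL : 1 ≤ L) (hy : 16 ≤ y)
    (hs : (√2 * y - 8) ^ 2 * L ≤ s) : (y - 8) ^ 2 * L ≤ (s - 1) / 2 - 2 * √(s * L) := by
  have h2 : √2 ^ 2 = 2 := sq_sqrt zero_le_two
  have h2hi : √2 ≤ 1.415 := by nlinarith [sqrt_nonneg 2]
  have ha : 14 ≤ √2 * y - 8 := by nlinarith [one_le_sqrt.2 one_le_two]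
  have hL0 : 0 ≤ L := zero_le_one.trans hL
  have hs0 : 0 ≤ s := le_trans (by positivity) hs
  have hz : (√2 * y - 8) * √L ≤ √s := by
    rw [← sqrt_sq (by linarith : 0 ≤ √2 * y - 8), ← sqrt_mul (sq_nonneg _)]
    exact sqrt_le_sqrt hs
  -- `(s - 1) / 2 - 2√(sL) = ((√s - 2√L)² - 4L - 1) / 2` increases with `√s`.
  have hgap : ((√2 * y - 10) * √L) ^ 2 ≤ (√s - 2 * √L) ^ 2 :=
    pow_le_pow_left₀ (by nlinarith [one_le_sqrt.2 hL]) (by linarith) 2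
  rw [mul_pow, sq_sqrt hL0, sub_sq, sub_sq, mul_pow, mul_pow, h2, sq_sqrt hs0, sq_sqrt hL0] at hgap
  have hslack : 1 ≤ (16 - 10 * √2) * y - 16 := by
    nlinarith [mul_nonneg (sub_nonneg.2 h2hi) (by linarith : (0 : ℝ) ≤ y)]
  rw [sqrt_mul hs0]
  nlinarith [mul_le_mul hslack hL zero_le_one (by linarith)]

namespace SimpleGraph

variable {V : Type*}

section DecidableEq

variable [DecidableEq V]

theorem exists_isNClique_of_forall_exists_le_card_adj (G : SimpleGraph V) [DecidableRel G.Adj]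
    {L : ℝ} (hL : 1 ≤ L)
    (hdeg : ∀ B : Finset V, 2 ≤ #B →
      ∃ v ∈ B, ((#B : ℝ) - 1) / 2 - 2 * √(#B * L) ≤ #{w ∈ B | G.Adj v w})
    (r : ℕ) {B : Finset V} (hB : (√2 ^ (r + 8) - 8) ^ 2 * L ≤ #B) :
    ∃ K ⊆ B, G.IsNClique r K := by
  induction r generalizing B with
  | zero => exact ⟨∅, empty_subset B, isNClique_empty.2 rfl⟩
  | succ r ih =>
    rw [show √2 ^ (r + 1 + 8) = √2 * √2 ^ (r + 8) by ring] at hB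
    have hnbhd := sq_sub_mul_le_half_sub_two_sqrt hL (sixteen_le_sqrt_two_pow r) hB
    have hB2 : 2 ≤ #B := by
      have : (2 : ℝ) ≤ #B := by nlinarith [sqrt_nonneg (#B * L), sixteen_le_sqrt_two_pow r]
      exact_mod_cast this
    obtain ⟨v, hv, hdeg_v⟩ := hdeg B hB2
    obtain ⟨K, hKN, hK⟩ := ih (hnbhd.trans hdeg_v)
    exact ⟨insert v K, insert_subset hv (hKN.trans (filter_subset _ _)),
      hK.insert fun w hw => (mem_filter.1 (hKN hw)).2⟩

theorem exists_isNClique_of_two_pow_mul_le (G : SimpleGraph V) [DecidableRel G.Adj]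
    {L : ℝ} (hL : 1 ≤ L)
    (hdeg : ∀ B : Finset V, 2 ≤ #B →
      ∃ v ∈ B, ((#B : ℝ) - 1) / 2 - 2 * √(#B * L) ≤ #{w ∈ B | G.Adj v w})
    (r : ℕ) {B : Finset V} (hB : 2 ^ (r + 8) * L ≤ #B) :
    ∃ K ⊆ B, G.IsNClique r K := by
  refine G.exists_isNClique_of_forall_exists_le_card_adj hL hdeg r (le_trans ?_ hB)
  have hsq : (√2 ^ (r + 8)) ^ 2 = 2 ^ (r + 8) := by
    rw [← pow_mul, mul_comm, pow_mul, sq_sqrt zero_le_two]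
  have := sixteen_le_sqrt_two_pow r
  gcongr
  nlinarith

theorem sum_card_filter_fromRel_adj (r : V → V → Prop) [DecidableRel r]
    (hr : ∀ u v, r u v → ¬ r v u) (B : Finset V) :
    ∑ v ∈ B, #{w ∈ B | (fromRel r).Adj v w} = 2 * #{x ∈ B ×ˢ B | r x.1 x.2} := by
  have hcount : ∑ v ∈ B, #{w ∈ B | r v w} = #{x ∈ B ×ˢ B | r x.1 x.2} := by
    simp only [card_filter, sum_product]
  have hsplit : ∀ v, #{w ∈ B | (fromRel r).Adj v w} = #{w ∈ B | r v w} + #{w ∈ B | r w v} := by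
    intro v
    rw [← card_union_of_disjoint (disjoint_filter.2 fun w _ h => hr v w h), ← filter_or]
    congr 1
    refine filter_congr fun w _ => ⟨fun h => h.2, fun h => ⟨?_, h⟩⟩
    rintro rfl
    exact h.elim (fun h => hr v v h h) (fun h => hr v v h h)
  rw [sum_congr rfl fun v _ => hsplit v, sum_add_distrib, hcount, two_mul]
  congr 1
  rw [← hcount]
  simp only [card_filter]
  exact sum_comm

end DecidableEq

variable [LinearOrder V]

/-- The pair `{u, v}` with `u < v` has colour `f (u, v)`; the values of `f` at pairs `(u, v)` with
`u ≥ v` play no role. -/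
def colorClassGraph (f : V × V → Bool) (b : Bool) : SimpleGraph V :=
  fromRel fun u v => u < v ∧ f (u, v) = b

instance (f : V × V → Bool) (b : Bool) : DecidableRel (colorClassGraph f b).Adj :=
  inferInstanceAs (DecidableRel (fromRel _).Adj)

theorem compl_colorClassGraph (f : V × V → Bool) (b : Bool) :
    (colorClassGraph f b)ᶜ = colorClassGraph f (!b) := by
  ext u v
  simp only [colorClassGraph, compl_adj, fromRel_adj]
  rcases lt_trichotomy u v with h | rfl | h
  · cases b <;> simp [h, h.ne, h.not_gt]
  · simp
  · cases b <;> simp [h, h.ne', h.not_gt]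

theorem exists_le_card_filter_colorClassGraph_adj (f : V × V → Bool) (b : Bool) {B : Finset V}
    (hB : B.Nonempty) {δ : ℝ}
    (hf : (#{x ∈ B ×ˢ B | x.1 < x.2} : ℝ) / 2 - #B * δ <
      #{x ∈ {x ∈ B ×ˢ B | x.1 < x.2} | f x = b}) :
    ∃ v ∈ B, ((#B : ℝ) - 1) / 2 - 2 * δ ≤ #{w ∈ B | (colorClassGraph f b).Adj v w} := by
  have hsum : (2 : ℝ) * #{x ∈ {x ∈ B ×ˢ B | x.1 < x.2} | f x = b} =
      ∑ v ∈ B, (#{w ∈ B | (colorClassGraph f b).Adj v w} : ℝ) := by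
    rw [filter_filter]
    exact_mod_cast (sum_card_filter_fromRel_adj (fun u v => u < v ∧ f (u, v) = b)
      (fun u v h h' => h.1.not_gt h'.1) B).symm
  rw [card_product_filter_lt, Nat.cast_choose_two] at hf
  refine exists_le_of_sum_le hB ?_
  rw [sum_const, nsmul_eq_mul, ← hsum]
  nlinarith

end SimpleGraph

/-- For any `n ≥ 2` there is an `n`-vertex graph in which, for every `r ≥ 2`, every
subset of `⌈2^(r+8)·log₂ n⌉` vertices contains both a clique and an independent set
of size `r`. -/
theorem exists_locally_ramsey_graph (n : ℕ) (hn : 2 ≤ n) :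
    ∃ G : SimpleGraph (Fin n), ∀ r : ℕ, 2 ≤ r →
      ∀ A : Finset (Fin n), ⌈(2 : ℝ) ^ (r + 8) * Real.logb 2 n⌉₊ ≤ A.card →
        (∃ K ⊆ A, G.IsNClique r K) ∧ (∃ K ⊆ A, (Gᶜ).IsNClique r K) := by
  have hL : 1 ≤ logb 2 n := by
    rw [le_logb_iff_rpow_le one_lt_two (by positivity), rpow_one]
    exact_mod_cast hn
  obtain ⟨f, hf⟩ := exists_pair_coloring_balanced (V := Fin n) (by simpa using hn)
  rw [Fintype.card_fin] at hf
  have hclique : ∀ b r (A : Finset (Fin n)), ⌈(2 : ℝ) ^ (r + 8) * logb 2 n⌉₊ ≤ #A →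
      ∃ K ⊆ A, (colorClassGraph f b).IsNClique r K := fun b r A hA =>
    exists_isNClique_of_two_pow_mul_le _ hL
      (fun B hB => exists_le_card_filter_colorClassGraph_adj f b (card_pos.1 (by omega))
        (hf B hB b))
      r ((Nat.le_ceil _).trans (by exact_mod_cast hA))
  refine ⟨colorClassGraph f true, fun r _ A hA => ⟨hclique true r A hA, ?_⟩⟩
  rw [compl_colorClassGraph]
  exact hclique false r A hA
end

section
/- Suppose there exists an n-vertex graph (n ≥ 2) in which every subset of m vertices contains both a clique and an independent set of size r, where r ≥ 16·log₂ n. Then there exists an n-vertex graph G' such that: (1) G' contains no clique and no independent set of size r/2; and (2) every subset of m vertices of G' contains both a clique and an independent set of size r/(17·log₂ n). -/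
/-!
Flip every pair of vertices of `G` independently with probability `p = 8 log₂ n / r`. A fixed set of
`⌈r/2⌉` vertices becomes a clique (or an independent set) only if its pairs are flipped according to
one prescribed pattern, which has probability at most `(1 - p) ^ (⌈r/2⌉ choose 2)` as `p ≤ 1/2`;
this beats the `n ^ ⌈r/2⌉` such sets. An exponential-moment bound shows that, except with small
probability, no set of `⌈r⌉` vertices receives more than `8 log₂ n · ⌈r⌉` flips. Inside a clique of
`G` of size `⌈r⌉` the flipped pairs then form a sparse graph, and Turán's theorem provides an
independent set of it of size `⌈r⌉ / (17 log₂ n)`, which is still a clique after flipping.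
-/

open Finset Real
open scoped symmDiff

section Bernoulli

variable {β : Type*} [DecidableEq β] {E : Finset β} {p : ℝ}

variable (E p) in
def bernoulliWeight (ω : Finset β) : ℝ := p ^ #ω * (1 - p) ^ #(E \ ω)

open Classical in
variable (E p) in
noncomputable def bernoulliProb (A : Finset β → Prop) : ℝ :=
  ∑ ω ∈ E.powerset with A ω, bernoulliWeight E p ω

theorem bernoulliWeight_nonneg (hp₀ : 0 ≤ p) (hp₁ : p ≤ 1) (ω : Finset β) :
    0 ≤ bernoulliWeight E p ω := by
  have : 0 ≤ 1 - p := by linarith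
  unfold bernoulliWeight
  positivity

theorem sum_bernoulliWeight_mul_prod (f g : β → ℝ) :
    ∑ ω ∈ E.powerset, bernoulliWeight E p ω * ∏ e ∈ E, (if e ∈ ω then f e else g e) =
      ∏ e ∈ E, (p * f e + (1 - p) * g e) := by
  rw [Finset.prod_add]
  refine sum_congr rfl fun ω hω => ?_
  rw [← prod_sdiff (mem_powerset.mp hω), prod_ite_of_false fun e he => (mem_sdiff.mp he).2,
    prod_ite_of_true fun e he => he, bernoulliWeight, prod_mul_distrib, prod_mul_distrib,
    prod_const, prod_const]
  ring

theorem sum_bernoulliWeight : ∑ ω ∈ E.powerset, bernoulliWeight E p ω = 1 := by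
  simpa using sum_bernoulliWeight_mul_prod (E := E) (p := p) 1 1

theorem exists_not_of_bernoulliProb_lt_one {A : Finset β → Prop}
    (h : bernoulliProb E p A < 1) : ∃ ω ⊆ E, ¬ A ω := by
  classical
  by_contra! hA
  rw [bernoulliProb, filter_true_of_mem fun ω hω => hA ω (mem_powerset.mp hω),
    sum_bernoulliWeight] at h
  exact lt_irrefl _ h

theorem bernoulliProb_or_le (hp₀ : 0 ≤ p) (hp₁ : p ≤ 1) (A B : Finset β → Prop) :
    bernoulliProb E p (fun ω => A ω ∨ B ω) ≤ bernoulliProb E p A + bernoulliProb E p B := by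
  have hw := bernoulliWeight_nonneg (E := E) hp₀ hp₁
  rw [bernoulliProb, bernoulliProb, bernoulliProb, ← sum_union_inter]
  refine le_add_of_le_of_nonneg ?_ (sum_nonneg fun ω _ => hw ω)
  refine sum_le_sum_of_subset_of_nonneg (fun ω hω => ?_) fun ω _ _ => hw ω
  simp only [mem_union, mem_filter] at hω ⊢
  tauto

theorem bernoulliProb_exists_le (hp₀ : 0 ≤ p) (hp₁ : p ≤ 1) {ι : Type*} (I : Finset ι)
    (A : ι → Finset β → Prop) :
    bernoulliProb E p (fun ω => ∃ i ∈ I, A i ω) ≤ ∑ i ∈ I, bernoulliProb E p (A i) := by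
  induction I using Finset.cons_induction with
  | empty => simp [bernoulliProb]
  | cons i I hi ih =>
    simp only [mem_cons, exists_eq_or_imp, sum_cons]
    exact (bernoulliProb_or_le hp₀ hp₁ _ _).trans (add_le_add le_rfl ih)

theorem mul_bernoulliProb_le_prod (hp₀ : 0 ≤ p) (hp₁ : p ≤ 1) {A : Finset β → Prop}
    {f g : β → ℝ} (hf : ∀ e, 0 ≤ f e) (hg : ∀ e, 0 ≤ g e) {t : ℝ}
    (ht : ∀ ω ⊆ E, A ω → t ≤ ∏ e ∈ E, if e ∈ ω then f e else g e) :
    t * bernoulliProb E p A ≤ ∏ e ∈ E, (p * f e + (1 - p) * g e) := by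
  classical
  have hw := bernoulliWeight_nonneg (E := E) hp₀ hp₁
  calc t * bernoulliProb E p A
      ≤ ∑ ω ∈ E.powerset with A ω,
          bernoulliWeight E p ω * ∏ e ∈ E, (if e ∈ ω then f e else g e) := by
        rw [bernoulliProb, mul_sum]
        refine sum_le_sum fun ω hω => ?_
        rw [mem_filter, mem_powerset] at hω
        rw [mul_comm]
        exact mul_le_mul_of_nonneg_left (ht ω hω.1 hω.2) (hw ω)
    _ ≤ ∑ ω ∈ E.powerset, bernoulliWeight E p ω * ∏ e ∈ E, (if e ∈ ω then f e else g e) :=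
        sum_le_sum_of_subset_of_nonneg (filter_subset _ _) fun ω _ _ =>
          mul_nonneg (hw ω) (prod_nonneg fun e _ => by split_ifs <;> simp [hf, hg])
    _ = ∏ e ∈ E, (p * f e + (1 - p) * g e) := sum_bernoulliWeight_mul_prod f g

theorem bernoulliProb_inter_eq_le (hp₀ : 0 ≤ p) (hp : p ≤ 1 / 2) (T pat : Finset β) :
    bernoulliProb E p (fun ω => ω ∩ T = pat) ≤ (1 - p) ^ #(E ∩ T) := by
  -- for `ω ⊆ E`, the product of these factors over `E` is the indicator of `ω ∩ T = pat`
  have hpat := mul_bernoulliProb_le_prod (E := E) (A := fun ω => ω ∩ T = pat) hp₀ (by linarith)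
    (f := fun e => if e ∈ T ∧ e ∉ pat then 0 else 1) (g := fun e => if e ∈ pat then 0 else 1)
    (fun e => by split_ifs <;> norm_num) (fun e => by split_ifs <;> norm_num) (t := 1)
    (fun ω _ hω => by
      subst hω
      exact (prod_eq_one fun e _ => by split_ifs <;> simp_all).ge)
  rw [one_mul] at hpat
  refine hpat.trans ?_
  rw [← prod_const, ← Finset.prod_ite_mem]
  refine prod_le_prod (fun e _ => by split_ifs <;> linarith) fun e _ => ?_
  split_ifs <;> first | linarith | tauto

theorem two_pow_mul_bernoulliProb_le (hp₀ : 0 ≤ p) (hp₁ : p ≤ 1) (T : Finset β) (b : ℕ) :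
    2 ^ b * bernoulliProb E p (fun ω => b ≤ #(ω ∩ T)) ≤ (1 + p) ^ #(E ∩ T) := by
  refine (mul_bernoulliProb_le_prod hp₀ hp₁ (f := fun e => if e ∈ T then 2 else 1)
    (g := fun _ => 1) (fun e => by split_ifs <;> norm_num) (fun _ => zero_le_one)
    fun ω hω hb => ?_).trans_eq ?_
  · rw [Finset.prod_ite_mem, inter_eq_right.mpr hω, Finset.prod_ite_mem, prod_const]
    exact pow_le_pow_right₀ one_le_two hb
  · rw [← prod_const, ← Finset.prod_ite_mem]
    refine prod_congr rfl fun e _ => ?_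
    split_ifs <;> ring

end Bernoulli

theorem one_le_logb_two_of_two_le {n : ℕ} (hn : 2 ≤ n) : 1 ≤ logb 2 n := by
  rw [le_logb_iff_rpow_le one_lt_two (by positivity), rpow_one]
  exact_mod_cast hn

theorem choose_le_exp_mul_logb_mul_log {n : ℕ} (hn : 0 < n) (k : ℕ) :
    (n.choose k : ℝ) ≤ exp (k * logb 2 n * log 2) := by
  calc (n.choose k : ℝ) ≤ (n : ℝ) ^ k := by exact_mod_cast n.choose_le_pow k
    _ = exp (k * logb 2 n * log 2) := by
      rw [mul_assoc, logb, div_mul_cancel₀ _ (log_pos one_lt_two).ne', ← log_pow,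
        exp_log (by positivity)]

theorem choose_mul_two_mul_one_sub_pow_le {n k : ℕ} {r : ℝ} (hn : 2 ≤ n)
    (hr : 16 * logb 2 n ≤ r) (hk : r / 2 ≤ k) :
    n.choose k * (2 * (1 - 8 * logb 2 n / r) ^ k.choose 2) ≤ 1 / 3 := by
  set L := logb 2 n
  have hL : 1 ≤ L := one_le_logb_two_of_two_le hn
  have hr₀ : 0 < r := by linarith
  have hk₀ : (0 : ℝ) ≤ k := k.cast_nonneg
  set p := 8 * L / r
  have hp : p ≤ 1 / 2 := by rw [div_le_iff₀ hr₀]; linarith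
  have hpM : 2 * L * k - k / 4 ≤ p * k.choose 2 := by
    rw [Nat.cast_choose_two, div_mul_div_comm, le_div_iff₀ (by positivity)]
    have h₁ : 0 ≤ L * k * (k - r / 2) := by
      have : 0 ≤ k - r / 2 := by linarith
      positivity
    have h₂ : 0 ≤ k * (r - 16 * L) := by
      have : 0 ≤ r - 16 * L := by linarith
      positivity
    linarith
  have hexp : k * L * log 2 - p * k.choose 2 ≤ -6 := by
    have h₁ : k * L * log 2 ≤ k * L :=
      mul_le_of_le_one_right (by positivity) (by linarith [log_two_lt_d9])
    have h₂ : (k : ℝ) ≤ k * L := le_mul_of_one_le_right hk₀ hL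
    linarith
  calc n.choose k * (2 * (1 - p) ^ k.choose 2)
      ≤ exp (k * L * log 2) * (2 * exp (-p) ^ k.choose 2) := by
        have : 0 ≤ 1 - p := by linarith
        gcongr ?_ * (2 * ?_ ^ _)
        · exact choose_le_exp_mul_logb_mul_log (by omega) k
        · linarith [add_one_le_exp (-p)]
    _ = 2 * exp (k * L * log 2 - p * k.choose 2) := by
        rw [← exp_nat_mul, sub_eq_add_neg, exp_add]
        ring_nf
    _ ≤ 2 * exp (-6) := by gcongr
    _ ≤ 1 / 3 := by
        rw [exp_neg, ← div_eq_mul_inv, div_le_iff₀ (exp_pos _)]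
        linarith [add_one_le_exp 6]

theorem choose_mul_one_add_pow_div_two_pow_le {n s b : ℕ} {r : ℝ} (hn : 2 ≤ n)
    (hr : 16 * logb 2 n ≤ r) (hs : r ≤ s) (hs' : s < r + 1) (hb : 8 * logb 2 n * s ≤ b) :
    n.choose s * ((1 + 8 * logb 2 n / r) ^ s.choose 2 / 2 ^ b) ≤ 1 / 3 := by
  set L := logb 2 n
  have hL : 1 ≤ L := one_le_logb_two_of_two_le hn
  have hr₀ : 0 < r := by linarith
  have hs₀ : (0 : ℝ) ≤ s := s.cast_nonneg
  set p := 8 * L / r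
  have hpN : p * s.choose 2 ≤ 4 * L * s := by
    rw [Nat.cast_choose_two, div_mul_div_comm, div_le_iff₀ (by positivity)]
    have : 0 ≤ L * s * (r + 1 - s) := by
      have : 0 ≤ r + 1 - s := by linarith
      positivity
    linarith
  have hLs : 16 ≤ L * s := by nlinarith
  have hexp : s * L * log 2 + p * s.choose 2 - b * log 2 ≤ -8 := by
    have hlog := log_two_gt_d9
    have h₁ : 8 * L * s * log 2 ≤ b * log 2 := by gcongr
    have h₂ : L * s * (4 - 7 * log 2) ≤ L * s * (-1 / 2) := by gcongr; linarith
    linarith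
  have h2b : (2 : ℝ) ^ b = exp (b * log 2) := by rw [exp_nat_mul, exp_log two_pos]
  calc n.choose s * ((1 + p) ^ s.choose 2 / 2 ^ b)
      ≤ exp (s * L * log 2) * (exp p ^ s.choose 2 / exp (b * log 2)) := by
        have : 0 ≤ 1 + p := by positivity
        rw [h2b]
        gcongr ?_ * (?_ ^ _ / _)
        · exact choose_le_exp_mul_logb_mul_log (by omega) s
        · linarith [add_one_le_exp p]
    _ = exp (s * L * log 2 + p * s.choose 2 - b * log 2) := by
        rw [← exp_nat_mul, exp_sub, exp_add]
        ring_nf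
    _ ≤ exp (-8) := exp_le_exp.mpr hexp
    _ ≤ 1 / 3 := by
        rw [exp_neg, inv_le_comm₀ (exp_pos _) (by norm_num)]
        linarith [add_one_le_exp 8]

namespace SimpleGraph

section Turan

variable {V : Type*} [Fintype V] {H : SimpleGraph V} [DecidableRel H.Adj]

theorem CliqueFree.two_mul_mul_card_edgeFinset_le {r : ℕ} (h : H.CliqueFree (r + 1)) :
    2 * r * #H.edgeFinset ≤ (r - 1) * Fintype.card V ^ 2 := by
  rcases r.eq_zero_or_pos with rfl | hr
  · simp
  obtain ⟨T, _, hT⟩ := exists_isTuranMaximal (V := V) hr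
  obtain ⟨e⟩ := (isTuranMaximal_iff_nonempty_iso_turanGraph hr).mp hT
  calc 2 * r * #H.edgeFinset ≤ 2 * r * #T.edgeFinset := Nat.mul_le_mul_left _ (hT.2 h)
    _ = 2 * r * #(turanGraph (Fintype.card V) r).edgeFinset := by rw [e.card_edgeFinset_eq]
    _ ≤ (r - 1) * Fintype.card V ^ 2 := mul_card_edgeFinset_turanGraph_le

theorem card_edgeFinset_add_card_edgeFinset_compl [DecidableEq V] :
    #H.edgeFinset + #Hᶜ.edgeFinset = (Fintype.card V).choose 2 := by
  rw [← card_edgeFinset_top_eq_card_choose_two, ← card_union_of_disjoint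
    (disjoint_edgeFinset.mpr disjoint_compl_right)]
  congr 1
  ext e
  simp [← Set.mem_union, ← edgeSet_sup]

theorem exists_isIndepSet_sq_card_le [DecidableEq V] :
    ∃ K : Finset V, H.IsIndepSet K ∧
      Fintype.card V ^ 2 ≤ #K * (Fintype.card V + 2 * #H.edgeFinset) := by
  obtain ⟨K, hK⟩ := H.exists_isNIndepSet_indepNum
  refine ⟨K, hK.isIndepSet, ?_⟩
  rcases isEmpty_or_nonempty V with hW | ⟨⟨v⟩⟩
  · simp
  set α := H.indepNum
  set N := Fintype.card V
  have hα : 1 ≤ α := by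
    simpa using IsIndepSet.card_le_indepNum (G := H) (t := {v}) (by simp)
  have hfree : Hᶜ.CliqueFree (α + 1) := fun s hs => by
    have := (H.isNClique_compl.mp hs).isIndepSet.card_le_indepNum
    have := hs.card_eq
    omega
  have hturan : (2 * α * #Hᶜ.edgeFinset : ℝ) ≤ (α - 1) * N ^ 2 := by
    exact_mod_cast hfree.two_mul_mul_card_edgeFinset_le
  have hcompl : (#H.edgeFinset + #Hᶜ.edgeFinset : ℝ) = N * (N - 1) / 2 := by
    rw [← Nat.cast_choose_two]
    exact_mod_cast H.card_edgeFinset_add_card_edgeFinset_compl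
  rw [hK.card_eq]
  suffices (N ^ 2 : ℝ) ≤ α * (N + 2 * #H.edgeFinset) by exact_mod_cast this
  linear_combination hturan - (2 * α : ℝ) * hcompl

theorem exists_isIndepSet_subset_sq_card_le [DecidableEq V] (S : Finset V) :
    ∃ K ⊆ S, H.IsIndepSet K ∧ #S ^ 2 ≤ #K * (#S + 2 * #(H.edgeFinset ∩ S.sym2)) := by
  obtain ⟨K, hK, hcard⟩ := (H.induce (S : Set V)).exists_isIndepSet_sq_card_le
  have hedges : #(H.induce (S : Set V)).edgeFinset = #(H.edgeFinset ∩ S.sym2) := by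
    convert congrArg card (map_edgeFinset_induce (G := H) (s := (S : Set V))) using 2
    · rw [card_map]
      congr!
    · simp
  refine ⟨K.map (Function.Embedding.subtype _), ?_, ?_, ?_⟩
  · intro v hv
    obtain ⟨u, -, rfl⟩ := mem_map.mp hv
    exact u.2
  · rintro _ hu _ hv huv
    obtain ⟨u, hu', rfl⟩ := mem_map.mp hu
    obtain ⟨v, hv', rfl⟩ := mem_map.mp hv
    exact hK hu' hv' (ne_of_apply_ne _ huv)
  · rw [card_map, ← hedges]
    simpa using hcard

end Turan

variable {V : Type*} {G : SimpleGraph V} {ω : Finset (Sym2 V)}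

def scramble (G : SimpleGraph V) (ω : Finset (Sym2 V)) : SimpleGraph V :=
  G ∆ fromEdgeSet ω

theorem scramble_adj {u v : V} :
    (G.scramble ω).Adj u v ↔ u ≠ v ∧ (G.Adj u v ↔ s(u, v) ∉ ω) := by
  by_cases h : u = v
  · simp [h]
  · simp [scramble, symmDiff_def, h]
    tauto

theorem compl_scramble : (G.scramble ω)ᶜ = Gᶜ.scramble ω := by
  ext u v
  simp only [compl_adj, scramble_adj]
  tauto

theorem IsClique.scramble {s : Set V} (hG : G.IsClique s)
    (hω : (fromEdgeSet ω).IsIndepSet s) : (G.scramble ω).IsClique s := fun _ hu _ hv huv =>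
  scramble_adj.mpr ⟨huv, iff_of_true (hG hu hv huv) fun h => hω hu hv huv ⟨h, huv⟩⟩

variable [Fintype V] [DecidableEq V]

theorem card_edgeFinset_top_inter_sym2 (S : Finset V) :
    #((⊤ : SimpleGraph V).edgeFinset ∩ S.sym2) = (#S).choose 2 := by
  rw [← Sym2.card_image_offDiag]
  congr 1
  ext e
  induction e using Sym2.ind
  simp
  aesop

theorem IsClique.inter_sym2_eq_of_scramble [DecidableRel G.Adj] {S : Finset V}
    (hω : ω ⊆ (⊤ : SimpleGraph V).edgeFinset) (h : (G.scramble ω).IsClique S) :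
    ω ∩ S.sym2 = Gᶜ.edgeFinset ∩ S.sym2 := by
  ext e
  induction e using Sym2.ind with
  | h u v =>
    by_cases huv : u = v
    · subst huv
      have : s(u, u) ∉ ω := fun h => by simpa using hω h
      simp [this]
    rw [mem_inter, mem_inter, mk_mem_sym2_iff, mem_edgeFinset, mem_edgeSet, compl_adj]
    refine and_congr_left fun ⟨hu, hv⟩ => ?_
    have := (scramble_adj.mp (h hu hv huv)).2
    tauto

theorem IsClique.card_lt_of_scramble [DecidableRel G.Adj] {k : ℕ}
    (hω : ω ⊆ (⊤ : SimpleGraph V).edgeFinset)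
    (hk : ∀ S : Finset V, #S = k → ω ∩ S.sym2 ≠ Gᶜ.edgeFinset ∩ S.sym2) {K : Finset V}
    (hK : (G.scramble ω).IsClique K) : #K < k := by
  by_contra! hKk
  obtain ⟨S, hSK, hS⟩ := exists_subset_card_eq hKk
  exact hk S hS ((hK.subset (coe_subset.mpr hSK)).inter_sym2_eq_of_scramble hω)

theorem IsClique.exists_isClique_scramble_subset {S : Finset V} (hG : G.IsClique S) :
    ∃ K ⊆ S, (G.scramble ω).IsClique K ∧ #S ^ 2 ≤ #K * (#S + 2 * #(ω ∩ S.sym2)) := by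
  obtain ⟨K, hKS, hK, hcard⟩ :=
    (fromEdgeSet (ω : Set (Sym2 V))).exists_isIndepSet_subset_sq_card_le S
  refine ⟨K, hKS, (hG.subset (coe_subset.mpr hKS)).scramble hK, hcard.trans ?_⟩
  gcongr
  intro e he
  simp only [mem_edgeFinset, edgeSet_fromEdgeSet, Set.mem_sdiff, mem_coe] at he
  exact he.1

theorem bernoulliProb_exists_inter_sym2_eq_le {p : ℝ} (hp₀ : 0 ≤ p) (hp : p ≤ 1 / 2) (k : ℕ)
    (X Y : Finset (Sym2 V)) :
    bernoulliProb (⊤ : SimpleGraph V).edgeFinset p (fun ω => ∃ S ∈ powersetCard k univ,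
      ω ∩ S.sym2 = X ∩ S.sym2 ∨ ω ∩ S.sym2 = Y ∩ S.sym2) ≤
        (Fintype.card V).choose k * (2 * (1 - p) ^ k.choose 2) := by
  refine (bernoulliProb_exists_le hp₀ (by linarith) _ _).trans ?_
  refine (sum_le_card_nsmul _ _ (2 * (1 - p) ^ k.choose 2) fun S hS => ?_).trans_eq (by simp)
  rw [← (mem_powersetCard_univ.mp hS), ← card_edgeFinset_top_inter_sym2, two_mul]
  exact (bernoulliProb_or_le hp₀ (by linarith) _ _).trans
    (add_le_add (bernoulliProb_inter_eq_le hp₀ hp _ _) (bernoulliProb_inter_eq_le hp₀ hp _ _))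

theorem bernoulliProb_exists_le_card_inter_sym2_le {p : ℝ} (hp₀ : 0 ≤ p) (hp₁ : p ≤ 1)
    (s b : ℕ) :
    bernoulliProb (⊤ : SimpleGraph V).edgeFinset p
      (fun ω => ∃ S ∈ powersetCard s univ, b ≤ #(ω ∩ S.sym2)) ≤
        (Fintype.card V).choose s * ((1 + p) ^ s.choose 2 / 2 ^ b) := by
  refine (bernoulliProb_exists_le hp₀ hp₁ _ _).trans ?_
  refine (sum_le_card_nsmul _ _ ((1 + p) ^ s.choose 2 / 2 ^ b) fun S hS => ?_).trans_eq
    (by simp)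
  rw [← (mem_powersetCard_univ.mp hS), ← card_edgeFinset_top_inter_sym2,
    le_div_iff₀ (by positivity), mul_comm]
  exact two_pow_mul_bernoulliProb_le hp₀ hp₁ _ _

variable (G) in
/-- By `IsClique.inter_sym2_eq_of_scramble`, the excluded patterns are the only ones that make a
set of `⌈r / 2⌉` vertices a clique of `G.scramble ω` or of its complement. -/
theorem exists_sparse_flips_avoiding_patterns [DecidableRel G.Adj] {r : ℝ}
    (hV : 2 ≤ Fintype.card V) (hr : 16 * logb 2 (Fintype.card V) ≤ r) :
    ∃ ω ⊆ (⊤ : SimpleGraph V).edgeFinset,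
      (∀ S : Finset V, #S = ⌈r / 2⌉₊ →
        ω ∩ S.sym2 ≠ Gᶜ.edgeFinset ∩ S.sym2 ∧ ω ∩ S.sym2 ≠ G.edgeFinset ∩ S.sym2) ∧
      ∀ S : Finset V, #S = ⌈r⌉₊ →
        (#(ω ∩ S.sym2) : ℝ) ≤ 8 * logb 2 (Fintype.card V) * ⌈r⌉₊ := by
  set L := logb 2 (Fintype.card V)
  have hL : 1 ≤ L := one_le_logb_two_of_two_le hV
  have hr₀ : 0 < r := by linarith
  set p := 8 * L / r
  have hp₀ : 0 ≤ p := by positivity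
  have hp : p ≤ 1 / 2 := by rw [div_le_iff₀ hr₀]; linarith
  set b := ⌊8 * L * ⌈r⌉₊⌋₊ + 1
  have hb : 8 * L * ⌈r⌉₊ ≤ b := by
    push_cast [b]
    exact (Nat.lt_floor_add_one _).le
  have hbad : bernoulliProb (⊤ : SimpleGraph V).edgeFinset p (fun ω =>
      (∃ S ∈ powersetCard ⌈r / 2⌉₊ univ,
        ω ∩ S.sym2 = Gᶜ.edgeFinset ∩ S.sym2 ∨ ω ∩ S.sym2 = G.edgeFinset ∩ S.sym2) ∨
      ∃ S ∈ powersetCard ⌈r⌉₊ univ, b ≤ #(ω ∩ S.sym2)) < 1 := by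
    calc _ ≤ 1 / 3 + 1 / 3 := (bernoulliProb_or_le hp₀ (by linarith) _ _).trans <| add_le_add
          ((bernoulliProb_exists_inter_sym2_eq_le hp₀ hp _ _ _).trans
            (choose_mul_two_mul_one_sub_pow_le hV hr (Nat.le_ceil _)))
          ((bernoulliProb_exists_le_card_inter_sym2_le hp₀ (by linarith) _ _).trans
            (choose_mul_one_add_pow_div_two_pow_le hV hr (Nat.le_ceil _)
              (Nat.ceil_lt_add_one hr₀.le) hb))
      _ < 1 := by norm_num
  obtain ⟨ω, hωE, hω⟩ := exists_not_of_bernoulliProb_lt_one hbad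
  simp only [not_or, not_exists, not_and, not_le, mem_powersetCard_univ] at hω
  refine ⟨ω, hωE, fun S hS => hω.1 S hS, fun S hS => ?_⟩
  calc (#(ω ∩ S.sym2) : ℝ) ≤ ⌊8 * L * ⌈r⌉₊⌋₊ := by
        exact_mod_cast Nat.lt_succ_iff.mp (hω.2 S hS)
    _ ≤ 8 * L * ⌈r⌉₊ := Nat.floor_le (by positivity)

theorem exists_isClique_scramble_div_le {r L : ℝ} (hr : 0 < r) (hL : 1 ≤ L)
    (hω : ∀ S : Finset V, #S = ⌈r⌉₊ → (#(ω ∩ S.sym2) : ℝ) ≤ 8 * L * ⌈r⌉₊) {A : Finset V}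
    (hA : ∃ K ⊆ A, G.IsClique (K : Set V) ∧ r ≤ #K) :
    ∃ K ⊆ A, (G.scramble ω).IsClique (K : Set V) ∧ r / (17 * L) ≤ #K := by
  obtain ⟨K₀, hK₀A, hK₀, hrK₀⟩ := hA
  obtain ⟨S, hSK₀, hS⟩ := exists_subset_card_eq (Nat.ceil_le.mpr hrK₀)
  obtain ⟨K, hKS, hK, hcard⟩ :=
    (hK₀.subset (coe_subset.mpr hSK₀)).exists_isClique_scramble_subset (ω := ω)
  refine ⟨K, hKS.trans (hSK₀.trans hK₀A), hK, ?_⟩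
  have hsparse := hω S hS
  rw [← hS] at hsparse
  have hrS : r ≤ #S := hS ▸ Nat.le_ceil r
  have hS₀ : (0 : ℝ) < #S := hr.trans_le hrS
  have hsq : (#S : ℝ) * #S ≤ 17 * L * #K * #S :=
    calc (#S : ℝ) * #S ≤ #K * (#S + 2 * #(ω ∩ S.sym2)) := by rw [← sq]; exact_mod_cast hcard
      _ ≤ #K * (17 * L * #S) := by gcongr; linarith [le_mul_of_one_le_left hS₀.le hL]
      _ = 17 * L * #K * #S := by ring
  rw [div_le_iff₀ (by positivity)]
  linarith [le_of_mul_le_mul_right hsq hS₀]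

end SimpleGraph

/-- The scrambling lemma: if there is an `n`-vertex graph in which every `m` vertices
contain both a clique and an independent set of size `r`, with `r ≥ 16·log₂ n`, then
there is an `n`-vertex graph `G'` with no clique and no independent set of size `r/2`,
and in which every `m` vertices contain both a clique and an independent set of size
`r/(17·log₂ n)`. -/
theorem scrambling_lemma (n : ℕ) (hn : 2 ≤ n) (m r : ℝ)
    (hr : 16 * Real.logb 2 n ≤ r)
    (hG : ∃ G : SimpleGraph (Fin n), ∀ A : Finset (Fin n), m ≤ (A.card : ℝ) →
      (∃ K ⊆ A, G.IsClique (K : Set (Fin n)) ∧ r ≤ (K.card : ℝ)) ∧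
      (∃ K ⊆ A, (Gᶜ).IsClique (K : Set (Fin n)) ∧ r ≤ (K.card : ℝ))) :
    ∃ G' : SimpleGraph (Fin n),
      (¬ ∃ K : Finset (Fin n), G'.IsClique (K : Set (Fin n)) ∧ r / 2 ≤ (K.card : ℝ)) ∧
      (¬ ∃ K : Finset (Fin n), (G'ᶜ).IsClique (K : Set (Fin n)) ∧ r / 2 ≤ (K.card : ℝ)) ∧
      ∀ A : Finset (Fin n), m ≤ (A.card : ℝ) →
        (∃ K ⊆ A, G'.IsClique (K : Set (Fin n)) ∧
          r / (17 * Real.logb 2 n) ≤ (K.card : ℝ)) ∧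
        (∃ K ⊆ A, (G'ᶜ).IsClique (K : Set (Fin n)) ∧
          r / (17 * Real.logb 2 n) ≤ (K.card : ℝ)) := by
  classical
  obtain ⟨G, hG⟩ := hG
  obtain ⟨ω, hωE, hhom, hsparse⟩ :=
    G.exists_sparse_flips_avoiding_patterns (r := r) (by simpa using hn) (by simpa using hr)
  simp only [Fintype.card_fin] at hsparse
  have hL := one_le_logb_two_of_two_le hn
  have hr₀ : 0 < r := by linarith
  refine ⟨G.scramble ω, fun ⟨K, hK, hrK⟩ => ?_, fun ⟨K, hK, hrK⟩ => ?_, fun A hA => ⟨?_, ?_⟩⟩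
  · exact (hK.card_lt_of_scramble hωE fun S hS => (hhom S hS).1).not_ge (Nat.ceil_le.mpr hrK)
  · rw [SimpleGraph.compl_scramble] at hK
    refine (hK.card_lt_of_scramble hωE fun S hS => ?_).not_ge (Nat.ceil_le.mpr hrK)
    convert (hhom S hS).2 using 3
    ext
    simp
  · exact SimpleGraph.exists_isClique_scramble_div_le hr₀ hL hsparse (hG A hA).1
  · rw [SimpleGraph.compl_scramble]
    exact SimpleGraph.exists_isClique_scramble_div_le hr₀ hL hsparse (hG A hA).2
end
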